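/- arXiv:2108.12797 — 2 statements merged into one kernel-verified Lean document; each statement's English description precedes it below -/
import Mathlib

section
/- Let m ≥ 1 and let t, j be integers with 0 ≤ t ≤ j ≤ m-1. For n ≥ 0 let a_n denote the number of Deutsch paths of length n from height t to height j all of whose heights h_i satisfy 0 ≤ h_i ≤ m-1. Then in the formal power series ring ℤ[[v]], the series S = Σ_{n≥0} a_n · vⁿ · ((1+v+v²)⁻¹)ⁿ satisfies S · (1-v) · (1+v)^{j-t+2} · (1-v^{m+2}) = v^{j-t} · (1-v^{t+2}) · (1-v^{m-j+1}) · (1+v+v²). -/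
open PowerSeries Finset

/-- The power series `1 + v + v²` over `ℤ`. -/
noncomputable def q : PowerSeries ℤ := 1 + X + X ^ 2

/-- `v · (1+v+v²)⁻¹` as a formal power series over `ℤ`. -/
noncomputable def w : PowerSeries ℤ := X * PowerSeries.invOfUnit q 1

/-- `p` is a Deutsch path of length `n`: each step is either an up-step `+1`
or a down-step of arbitrary (negative) size. -/
def IsDeutschPath (n : ℕ) (p : Fin (n + 1) → ℤ) : Prop :=
  ∀ i : Fin n, p i.succ - p i.castSucc = 1 ∨ p i.succ - p i.castSucc ≤ -1

/-- Number of Deutsch paths of length `n` from height `a` to height `b`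
all of whose heights satisfy the predicate `P`. -/
noncomputable def pathCount (n : ℕ) (a b : ℤ) (P : ℤ → Prop) : ℕ :=
  Nat.card {p : Fin (n + 1) → ℤ //
    p 0 = a ∧ p (Fin.last n) = b ∧ (∀ i, P (p i)) ∧ IsDeutschPath n p}

/-- The power series `Σ_{n≥0} a_n · vⁿ · ((1+v+v²)⁻¹)ⁿ`.  Since the `n`-th
summand has order `≥ n`, its coefficient of `v^N` is the (finite) sum of the
corresponding coefficients of the summands with `n ≤ N`. -/
noncomputable def series (a : ℕ → ℕ) : PowerSeries ℤ :=
  PowerSeries.mk fun N => ∑ n ∈ range (N + 1), (a n : ℤ) * coeff N (w ^ n)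

/-!
Write `S_t` for the series of paths from height `t` to `j` inside the strip `0 ≤ h ≤ m - 1`.
Splitting off the first step gives the linear system
`S_t = [t = j] + w (S_{t+1} + ∑_{h<t} S_h)` for `t < m`, with `S_m = 0`, where
`w = v / (1 + v + v²)`. Since `w` has no constant term, the system has at most one solution,
and the rational functions `S_t = g_t (1 + v + v²) / ((1 - v) (1 + v)^{j+2} (1 - v^{m+2}))`
solve it: this is a polynomial identity, checked through closed forms for the partial sums
`∑_{h<t} g_h`. For `t ≤ j` the numerator `g_t` contains the factor `(1 + v)^t`, which cancels.
-/

theorem PowerSeries.eq_zero_of_forall_X_pow_dvd {R : Type*} [CommSemiring R] {f : R⟦X⟧}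
    (h : ∀ n, X ^ n ∣ f) : f = 0 := by
  ext n
  simpa using X_pow_dvd_iff.mp (h (n + 1)) n n.lt_succ_self

theorem PowerSeries.eq_bot_of_le_span_X_mul {R : Type*} [CommRing R] {I : Ideal R⟦X⟧}
    (hI : I ≤ Ideal.span {X} * I) : I = ⊥ := by
  have hpow : ∀ n, I ≤ Ideal.span {X} ^ n * I := by
    intro n
    induction n with
    | zero => rw [pow_zero, one_mul]
    | succ n ih =>
      calc I ≤ Ideal.span {X} * I := hI
        _ ≤ Ideal.span {X} * (Ideal.span {X} ^ n * I) := Ideal.mul_mono_right ih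
        _ = Ideal.span {X} ^ (n + 1) * I := by rw [pow_succ', mul_assoc]
  refine eq_bot_iff.mpr fun f hf => Ideal.mem_bot.mpr <| eq_zero_of_forall_X_pow_dvd fun n => ?_
  have hf' := Ideal.mul_le_left (I := Ideal.span {X} ^ n) (J := I) (hpow n hf)
  rwa [Ideal.span_singleton_pow, Ideal.mem_span_singleton] at hf'

theorem X_dvd_w : (X : ℤ⟦X⟧) ∣ w := dvd_mul_right _ _

theorem w_mul_q : w * q = X := by
  rw [w, mul_assoc, mul_comm (invOfUnit q 1), mul_invOfUnit _ _ (by simp [q]), mul_one]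

theorem coeff_w_pow_of_lt {N n : ℕ} (h : N < n) : coeff N (w ^ n) = 0 :=
  X_pow_dvd_iff.mp (pow_dvd_pow_of_dvd X_dvd_w n) N h

theorem X_pow_dvd_series_sub_sum (a : ℕ → ℕ) (K : ℕ) :
    X ^ K ∣ series a - ∑ n ∈ range K, (a n : ℤ⟦X⟧) * w ^ n := by
  refine X_pow_dvd_iff.mpr fun N hN => ?_
  rw [map_sub, sub_eq_zero, series, coeff_mk, map_sum]
  simp_rw [← map_natCast (C (R := ℤ)), coeff_C_mul]
  refine sum_subset (range_subset_range.mpr hN) fun n _ hn => ?_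
  rw [coeff_w_pow_of_lt (by simpa using hn), mul_zero]

theorem series_eq_C_add_w_mul (a : ℕ → ℕ) :
    series a = C (a 0 : ℤ) + w * series (fun n => a (n + 1)) := by
  refine sub_eq_zero.mp <| eq_zero_of_forall_X_pow_dvd fun K => ?_
  have hsplit : ∑ n ∈ range (K + 1), (a n : ℤ⟦X⟧) * w ^ n
      = C (a 0 : ℤ) + w * ∑ n ∈ range K, (a (n + 1) : ℤ⟦X⟧) * w ^ n := by
    rw [sum_range_succ', mul_sum, add_comm, pow_zero, mul_one, map_natCast]
    simp only [pow_succ', mul_left_comm w]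
  rw [show series a - (C (a 0 : ℤ) + w * series (fun n => a (n + 1))) =
      (series a - ∑ n ∈ range (K + 1), (a n : ℤ⟦X⟧) * w ^ n) -
        w * (series (fun n => a (n + 1)) - ∑ n ∈ range K, (a (n + 1) : ℤ⟦X⟧) * w ^ n) by
    rw [hsplit]; ring]
  exact dvd_sub ((pow_dvd_pow X K.le_succ).trans (X_pow_dvd_series_sub_sum a (K + 1)))
    (dvd_mul_of_dvd_right (X_pow_dvd_series_sub_sum _ K) _)

theorem series_sum {ι : Type*} (s : Finset ι) (f : ι → ℕ → ℕ) :
    series (fun n => ∑ c ∈ s, f c n) = ∑ c ∈ s, series (f c) := by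
  ext N
  simp only [series, coeff_mk, Nat.cast_sum, sum_mul, map_sum]
  exact sum_comm

theorem eq_zero_of_eq_w_mul {m : ℕ} {d : ℕ → ℤ⟦X⟧} (hm : d m = 0)
    (hd : ∀ t < m, d t = w * (d (t + 1) + ∑ h ∈ range t, d h)) {t : ℕ} (ht : t ≤ m) :
    d t = 0 := by
  set I := Ideal.span (d '' Set.Iic m)
  have hI : I ≤ Ideal.span {X} * I := Ideal.span_le.mpr <| by
    rintro _ ⟨s, hs, rfl⟩
    rcases (Set.mem_Iic.mp hs).lt_or_eq with hs | rfl
    · have hmem : d (s + 1) + ∑ h ∈ range s, d h ∈ I :=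
        I.add_mem (Ideal.subset_span ⟨s + 1, Set.mem_Iic.mpr hs, rfl⟩) <|
          I.sum_mem fun h hh =>
            Ideal.subset_span ⟨h, Set.mem_Iic.mpr ((mem_range.mp hh).le.trans hs.le), rfl⟩
      rw [hd s hs, w, mul_assoc]
      exact Ideal.mul_mem_mul (Ideal.mem_span_singleton_self X) (I.mul_mem_left _ hmem)
    · rw [hm]
      exact zero_mem _
  have hdt : d t ∈ I := Ideal.subset_span ⟨t, ht, rfl⟩
  rwa [eq_bot_of_le_span_X_mul hI, Ideal.mem_bot] at hdt

theorem isDeutschPath_succ_iff {n : ℕ} (p : Fin (n + 2) → ℤ) :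
    IsDeutschPath (n + 1) p ↔
      (p 1 - p 0 = 1 ∨ p 1 - p 0 ≤ -1) ∧ IsDeutschPath n (Fin.tail p) := by
  simp only [IsDeutschPath, Fin.forall_fin_succ, Fin.tail, Fin.succ_castSucc]
  rfl

abbrev DeutschPaths (n : ℕ) (a b : ℤ) (P : ℤ → Prop) : Type :=
  {p : Fin (n + 1) → ℤ //
    p 0 = a ∧ p (Fin.last n) = b ∧ (∀ i, P (p i)) ∧ IsDeutschPath n p}

theorem finite_deutschPaths {P : ℤ → Prop} (hP : {x | P x}.Finite) (n : ℕ) (a b : ℤ) :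
    Finite (DeutschPaths n a b P) :=
  have := hP.to_subtype
  Finite.of_injective (fun p i => (⟨p.1 i, p.2.2.2.1 i⟩ : {x | P x}))
    fun _ _ h => Subtype.ext <| funext fun i => congrArg Subtype.val (congrFun h i)

def deutschPathsSuccEquiv {P : ℤ → Prop} {a : ℤ} (ha : P a) (F : Finset ℤ)
    (hF_step : ∀ c ∈ F, c - a = 1 ∨ c - a ≤ -1)
    (hF_mem : ∀ c, P c → (c - a = 1 ∨ c - a ≤ -1) → c ∈ F) (n : ℕ) (b : ℤ) :
    DeutschPaths (n + 1) a b P ≃ Σ c : F, DeutschPaths n c b P where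
  toFun p :=
    have hD := (isDeutschPath_succ_iff p.1).mp p.2.2.2.2
    ⟨⟨p.1 1, hF_mem _ (p.2.2.2.1 1) (by simpa only [p.2.1] using hD.1)⟩,
      Fin.tail p.1, rfl, p.2.2.1, fun _ => p.2.2.2.1 _, hD.2⟩
  invFun x := ⟨Fin.cons a x.2.1, rfl, x.2.2.2.1, Fin.cases ha fun i => x.2.2.2.2.1 i,
      (isDeutschPath_succ_iff _).mpr ⟨by simpa [x.2.2.1] using hF_step _ x.1.2, x.2.2.2.2.2⟩⟩
  left_inv p := Subtype.ext <| (congrArg (Fin.cons · _) p.2.1.symm).trans (Fin.cons_self_tail p.1)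
  right_inv x := Sigma.subtype_ext (Subtype.ext x.2.2.1) rfl

theorem pathCount_succ {P : ℤ → Prop} (hP : {x | P x}.Finite) {a : ℤ} (ha : P a)
    (F : Finset ℤ) (hF_step : ∀ c ∈ F, c - a = 1 ∨ c - a ≤ -1)
    (hF_mem : ∀ c, P c → (c - a = 1 ∨ c - a ≤ -1) → c ∈ F) (n : ℕ) (b : ℤ) :
    pathCount (n + 1) a b P = ∑ c ∈ F, pathCount n c b P := by
  have := finite_deutschPaths hP n
  rw [pathCount, Nat.card_congr (deutschPathsSuccEquiv ha F hF_step hF_mem n b), Nat.card_sigma,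
    ← sum_coe_sort F]
  rfl

theorem pathCount_zero {P : ℤ → Prop} {a : ℤ} (ha : P a) (b : ℤ) :
    pathCount 0 a b P = if a = b then 1 else 0 := by
  split_ifs with hab
  · refine Nat.card_eq_one_iff_unique.mpr ⟨⟨fun p p' => Subtype.ext <| funext fun i => ?_⟩,
      ⟨⟨fun _ => a, rfl, hab, fun _ => ha, Fin.elim0⟩⟩⟩
    rw [Fin.fin_one_eq_zero i, p.2.1, p'.2.1]
  · exact @Nat.card_of_isEmpty _ ⟨fun p => hab (p.2.1.symm.trans p.2.2.1)⟩

theorem pathCount_of_not {P : ℤ → Prop} {a : ℤ} (ha : ¬ P a) (n : ℕ) (b : ℤ) :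
    pathCount n a b P = 0 :=
  @Nat.card_of_isEmpty _ ⟨fun p => ha (p.2.1 ▸ p.2.2.2.1 0)⟩

def InStrip (m : ℕ) (x : ℤ) : Prop := 0 ≤ x ∧ x ≤ (m : ℤ) - 1

noncomputable def stripSeries (m j t : ℕ) : ℤ⟦X⟧ :=
  series fun n => pathCount n t j (InStrip m)

theorem stripSeries_self (m j : ℕ) : stripSeries m j m = 0 := by
  have hout : ¬ InStrip m m := fun h => by linarith [h.2]
  simp only [stripSeries, pathCount_of_not hout]
  ext N
  simp [series]

theorem stripSeries_eq_C_add_w_mul {m j t : ℕ} (ht : t < m) :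
    stripSeries m j t = C (if t = j then 1 else 0) +
      w * (stripSeries m j (t + 1) + ∑ h ∈ range t, stripSeries m j h) := by
  have hfin : {x | InStrip m x}.Finite := (Set.finite_Icc 0 ((m : ℤ) - 1)).subset fun x hx => hx
  have hin : InStrip m t := ⟨by positivity, by omega⟩
  set F : Finset ℤ := insert ((t : ℤ) + 1) ((range t).image Nat.cast)
  have hF_step : ∀ c ∈ F, c - t = 1 ∨ c - t ≤ -1 := by
    simp only [F, mem_insert, mem_image, mem_range]
    rintro c (rfl | ⟨h, hh, rfl⟩) <;> omega
  have hF_mem : ∀ c, InStrip m c → (c - t = 1 ∨ c - t ≤ -1) → c ∈ F := by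
    intro c hc hstep
    have hc0 := hc.1
    simp only [F, mem_insert, mem_image, mem_range]
    exact hstep.imp (by omega) fun _ => ⟨c.toNat, by omega, by omega⟩
  rw [stripSeries, series_eq_C_add_w_mul]
  congr 2
  · rw [pathCount_zero hin]
    simp
  · have hnotin : (t : ℤ) + 1 ∉ (range t).image Nat.cast := by
      simp only [mem_image, mem_range, not_exists, not_and]
      intro h _
      omega
    simp_rw [pathCount_succ hfin hin F hF_step hF_mem]
    rw [series_sum, sum_insert hnotin, sum_image (by simp)]
    rfl

section ClosedForm

variable {R : Type*} [CommRing R] (x : R) (m j : ℕ)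

def stripNumerator (h : ℕ) : R :=
  if h ≤ j then x ^ (j - h) * (1 + x) ^ h * (1 - x ^ (h + 2)) * (1 - x ^ (m - j + 1))
  else x * (1 - x ^ (j + 1)) * (1 + x) ^ h * (1 - x ^ (m - h))

def stripDenominator : R := (1 - x) * (1 + x) ^ (j + 2) * (1 - x ^ (m + 2))

theorem stripNumerator_self (hj : j < m) : stripNumerator x m j m = 0 := by
  simp [stripNumerator, hj.not_ge]

theorem mul_sum_stripNumerator_of_le (t k : ℕ) (htk : t + k = j + 1) :
    x * ∑ h ∈ range t, stripNumerator x m j h = (1 - x ^ (m - j + 1)) *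
      (x ^ (k + 1) * ((1 + x) ^ t - x ^ t) - x ^ (j + 2) * ((1 + x) ^ t - 1)) := by
  induction t generalizing k with
  | zero => simp
  | succ t ih =>
    rw [sum_range_succ, mul_add, ih (k + 1) (by omega), stripNumerator, if_pos (by omega),
      show j - t = k by omega]
    obtain rfl : j = t + k := by omega
    ring

theorem mul_sum_stripNumerator_of_gt (c e : ℕ) (hce : j + 1 + c + e = m) :
    x * ∑ h ∈ range (j + 1 + c), stripNumerator x m j h =
      (1 - x ^ (m - j + 1)) *
          (x * ((1 + x) ^ (j + 1) - x ^ (j + 1)) - x ^ (j + 2) * ((1 + x) ^ (j + 1) - 1)) +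
        (1 - x ^ (j + 1)) * (x * ((1 + x) ^ (j + 1 + c) - (1 + x) ^ (j + 1)) -
          x ^ (e + 3) * ((1 + x) ^ (j + 1 + c) - (1 + x) ^ (j + 1) * x ^ c)) := by
  induction c generalizing e with
  | zero =>
    rw [mul_sum_stripNumerator_of_le x m j (j + 1) 0 rfl]
    ring
  | succ c ih =>
    rw [← add_assoc, sum_range_succ, mul_add, ih (e + 1) (by omega), stripNumerator,
      if_neg (by omega), show m - (j + 1 + c) = e + 1 by omega]
    ring

theorem stripNumerator_mul (hj : j < m) {t : ℕ} (ht : t < m) :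
    stripNumerator x m j t * (1 + x + x ^ 2) =
      (if t = j then stripDenominator x m j else 0) +
        x * (stripNumerator x m j (t + 1) + ∑ h ∈ range t, stripNumerator x m j h) := by
  rw [mul_add x]
  rcases lt_trichotomy t j with htj | rfl | htj
  · rw [if_neg htj.ne, mul_sum_stripNumerator_of_le x m j t (j + 1 - t) (by omega),
      stripNumerator, if_pos htj.le, stripNumerator, if_pos (Nat.succ_le_of_lt htj)]
    obtain ⟨a, rfl⟩ : ∃ a, j = t + 1 + a := ⟨j - t - 1, by omega⟩
    rw [show t + 1 + a - t = a + 1 by omega, show t + 1 + a - (t + 1) = a by omega,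
      show t + 1 + a + 1 - t = a + 2 by omega]
    ring
  · rw [if_pos rfl, mul_sum_stripNumerator_of_le x m t t 1 rfl, stripNumerator, if_pos le_rfl,
      stripNumerator, if_neg (by omega), Nat.sub_self, stripDenominator]
    obtain ⟨e, rfl⟩ : ∃ e, m = t + 1 + e := ⟨m - t - 1, by omega⟩
    rw [show t + 1 + e - t + 1 = e + 2 by omega, show t + 1 + e - (t + 1) = e by omega]
    ring
  · obtain ⟨c, rfl⟩ : ∃ c, t = j + 1 + c := ⟨t - j - 1, by omega⟩
    obtain ⟨e, rfl⟩ : ∃ e, m = j + 1 + c + 1 + e := ⟨m - (j + 1 + c) - 1, by omega⟩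
    rw [if_neg (by omega), mul_sum_stripNumerator_of_gt x _ j c (e + 1) (by omega),
      stripNumerator, if_neg (by omega), stripNumerator, if_neg (by omega),
      show j + 1 + c + 1 + e - (j + 1 + c) = e + 1 by omega,
      show j + 1 + c + 1 + e - (j + 1 + c + 1) = e by omega,
      show j + 1 + c + 1 + e - j + 1 = c + e + 3 by omega]
    ring

end ClosedForm

theorem stripSeries_mul_stripDenominator {m j t : ℕ} (hj : j < m) (ht : t ≤ m) :
    stripSeries m j t * stripDenominator X m j = stripNumerator X m j t * q := by
  set D : ℤ⟦X⟧ := stripDenominator X m j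
  set g : ℕ → ℤ⟦X⟧ := stripNumerator X m j
  refine sub_eq_zero.mp <|
    eq_zero_of_eq_w_mul (d := fun t => stripSeries m j t * D - g t * q) ?_ (fun s hs => ?_) ht
  · simp [stripSeries_self, g, stripNumerator_self _ m j hj]
  · have hC : C (if s = j then 1 else 0 : ℤ) * D = if s = j then D else 0 := by
      split_ifs <;> simp
    have hq : q = 1 + X + X ^ 2 := rfl
    simp only [stripSeries_eq_C_add_w_mul hs, sum_sub_distrib, ← sum_mul]
    linear_combination hC - stripNumerator_mul (X : ℤ⟦X⟧) m j hj hs - g s * hq +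
      (g (s + 1) + ∑ h ∈ range s, g h) * w_mul_q

theorem stmt1 (m t j : ℕ) (hm : 1 ≤ m) (htj : t ≤ j) (hjm : j ≤ m - 1) :
    (series fun n => pathCount n t j (fun x => 0 ≤ x ∧ x ≤ (m : ℤ) - 1)) *
        (1 - X) * (1 + X) ^ (j - t + 2) * (1 - X ^ (m + 2)) =
      X ^ (j - t) * (1 - X ^ (t + 2)) * (1 - X ^ (m - j + 1)) * q := by
  have key := stripSeries_mul_stripDenominator (m := m) (j := j) (t := t) (by omega) (by omega)
  have hpow : (1 + X : ℤ⟦X⟧) ^ (j + 2) = (1 + X) ^ t * (1 + X) ^ (j - t + 2) := by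
    rw [← pow_add]
    congr 1
    omega
  rw [stripDenominator, stripNumerator, if_pos htj, hpow] at key
  have hX : (1 + X : ℤ⟦X⟧) ≠ 0 := fun h => by simpa using congrArg constantCoeff h
  refine mul_left_cancel₀ (pow_ne_zero t hX) ?_
  change (1 + X) ^ t * (stripSeries m j t * _ * _ * _) = _
  linear_combination key
end

section
/- Let K = ℚ(v) be the field of rational functions over ℚ and set z = v/(1+v+v²) in K. For m ≥ 0 let D_m = det M_m, where M_m is the m×m matrix over K with (0-indexed) entries M_{ij} = 1 if i = j, M_{ij} = -z if j = i-1 or j > i, and M_{ij} = 0 if j < i-1 (so D_0 = 1). Then for every m ≥ 0: (1+v+v²)² · D_{m+2} - (1+v+v²) · (1+v)² · D_{m+1} + v · (1+v)² · D_m = 0. -/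
open Finset

/-- The variable `v` in the field of rational functions `ℚ(v)`. -/
noncomputable def v : RatFunc ℚ := RatFunc.X

/-- `z = v / (1 + v + v²)` in `ℚ(v)`. -/
noncomputable def z : RatFunc ℚ := v / (1 + v + v ^ 2)

/-- The `m × m` matrix with `1` on the diagonal, `-z` on the subdiagonal and
everywhere strictly above the diagonal, and `0` below the subdiagonal. -/
noncomputable def M (m : ℕ) : Matrix (Fin m) (Fin m) (RatFunc ℚ) :=
  fun i j =>
    if (i : ℕ) = (j : ℕ) then 1
    else if (j : ℕ) + 1 = (i : ℕ) ∨ (i : ℕ) < (j : ℕ) then -z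
    else 0

/-- `D m` is the determinant of `M m`. -/
noncomputable def D (m : ℕ) : RatFunc ℚ := (M m).det

/-!
For a parameter `c` let `A_m` be the `m × m` matrix with `1` on the diagonal, `c` on the
subdiagonal and above the diagonal, `0` elsewhere, so that `M m = A_m` for `c = -z`.
Expanding `det A_{m+2}` along column `0`, whose only nonzero entries are `1` and `c`, gives
`det A_{m+1} - c · det N`, where `N` is `A_{m+1}` with its first row replaced by the constant
row `c`. That row is the first row of `A_{m+1}` plus `(c - 1)` times the first unit vector, so
`det N = det A_{m+1} + (c - 1) det A_m`, and hence
`det A_{m+2} = (1 - c) det A_{m+1} + c (1 - c) det A_m`.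
With `c = -z` and `z (1 + v + v²) = v`, clearing denominators gives the identity.
-/

open Matrix

section DeutschMatrix

variable {R : Type*} [CommRing R]

def deutschMatrix (c : R) (m : ℕ) : Matrix (Fin m) (Fin m) R :=
  fun i j => if (i : ℕ) = j then 1 else if (j : ℕ) + 1 = i ∨ (i : ℕ) < j then c else 0

theorem M_eq_deutschMatrix (m : ℕ) : M m = deutschMatrix (-z) m := rfl

theorem deutschMatrix_submatrix_succ (c : R) (m : ℕ) :
    (deutschMatrix c (m + 1)).submatrix Fin.succ Fin.succ = deutschMatrix c m := by
  ext i j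
  simp [deutschMatrix]

theorem det_updateRow_zero_single_deutschMatrix (c : R) (m : ℕ) :
    ((deutschMatrix c (m + 1)).updateRow 0 (Pi.single 0 1)).det = (deutschMatrix c m).det := by
  rw [← adjugate_apply, adjugate_fin_succ_eq_det_submatrix]
  simp [deutschMatrix_submatrix_succ]

theorem det_updateRow_zero_const_deutschMatrix (c : R) (m : ℕ) :
    ((deutschMatrix c (m + 1)).updateRow 0 (fun _ => c)).det
      = (deutschMatrix c (m + 1)).det + (c - 1) * (deutschMatrix c m).det := by
  have hrow : (fun _ => c) = deutschMatrix c (m + 1) 0 + (c - 1) • Pi.single 0 1 := by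
    funext j
    cases j using Fin.cases <;> simp [deutschMatrix]
  rw [hrow, det_updateRow_add, det_updateRow_smul, updateRow_eq_self,
    det_updateRow_zero_single_deutschMatrix]

theorem deutschMatrix_submatrix_one_succAbove_succ (c : R) (m : ℕ) :
    (deutschMatrix c (m + 2)).submatrix (1 : Fin (m + 2)).succAbove Fin.succ
      = (deutschMatrix c (m + 1)).updateRow 0 (fun _ => c) := by
  ext i j
  cases i using Fin.cases <;> simp [deutschMatrix]

theorem det_deutschMatrix_add_two (c : R) (m : ℕ) :
    (deutschMatrix c (m + 2)).det
      = (1 - c) * (deutschMatrix c (m + 1)).det + c * (1 - c) * (deutschMatrix c m).det := by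
  rw [det_succ_column_zero, Fin.sum_univ_succ, Fin.sum_univ_succ]
  have hdiag : deutschMatrix c (m + 2) 0 0 = 1 := by simp [deutschMatrix]
  have hsub : deutschMatrix c (m + 2) 1 0 = c := by simp [deutschMatrix]
  have hbelow : ∀ i : Fin m, deutschMatrix c (m + 2) i.succ.succ 0 = 0 := fun i => by
    simp [deutschMatrix]
  simp only [hbelow, mul_zero, zero_mul, sum_const_zero, add_zero, Fin.succAbove_zero,
    Fin.succ_zero_eq_one, Fin.val_zero, Fin.val_one, hdiag, hsub, deutschMatrix_submatrix_succ,
    deutschMatrix_submatrix_one_succAbove_succ, det_updateRow_zero_const_deutschMatrix]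
  ring

end DeutschMatrix

theorem one_add_v_add_v_sq_ne_zero : (1 + v + v ^ 2 : RatFunc ℚ) ≠ 0 := by
  have h : (1 + v + v ^ 2 : RatFunc ℚ)
      = algebraMap (Polynomial ℚ) (RatFunc ℚ) (1 + Polynomial.X + Polynomial.X ^ 2) := by
    simp [v, RatFunc.algebraMap_X]
  rw [h]
  refine RatFunc.algebraMap_ne_zero fun hc => ?_
  simpa using congrArg (Polynomial.eval 0) hc

theorem D_add_two (m : ℕ) : D (m + 2) = (1 + z) * D (m + 1) - z * (1 + z) * D m := by
  simp only [D, M_eq_deutschMatrix, det_deutschMatrix_add_two]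
  ring

theorem stmt5 (m : ℕ) :
    (1 + v + v ^ 2) ^ 2 * D (m + 2) - (1 + v + v ^ 2) * (1 + v) ^ 2 * D (m + 1)
      + v * (1 + v) ^ 2 * D m = 0 := by
  rw [D_add_two, z]
  field_simp [one_add_v_add_v_sq_ne_zero]
  ring
end
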